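/- For every real α with 1 < α < 2 and every natural number m ≥ 0, the symmetric partial sum of the fractional centred difference coefficients is strictly positive: Σ_{k=−m}^{m} g_k^{(α)} > 0. -/

import Mathlib

open Real

/-- The fractional centred difference coefficients
`g_k^{(α)} = ((−1)^k Γ(α+1)) / (Γ(α/2 − k + 1) Γ(α/2 + k + 1))`. -/
noncomputable def fracCoeff (α : ℝ) (k : ℤ) : ℝ :=
  ((-1 : ℝ) ^ k * Real.Gamma (α + 1)) /
    (Real.Gamma (α / 2 - (k : ℝ) + 1) * Real.Gamma (α / 2 + (k : ℝ) + 1))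

/-!
The symmetric partial sums telescope: since `g_{-k} = g_k`, induction on `m` with
`Γ(s + 1) = s Γ(s)` gives the closed form
`∑_{|k| ≤ m} g_k = Γ(α + 1) / ((α/2) · (-1)^m Γ(α/2 - m) · Γ(α/2 + m + 1))`.
For `0 < s < 1` the Gamma function alternates in sign on `s - m`, so `(-1)^m Γ(s - m) > 0`
and every factor of the closed form is positive.
-/

theorem Real.neg_one_pow_mul_Gamma_sub_nat_pos {s : ℝ} (hs₀ : 0 < s) (hs₁ : s < 1) (m : ℕ) :
    0 < (-1) ^ m * Gamma (s - m) := by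
  induction m with
  | zero => simpa using Gamma_pos_of_pos hs₀
  | succ m ih =>
    have hrec : Gamma (s - m) = (s - (m + 1 : ℕ)) * Gamma (s - (m + 1 : ℕ)) := by
      rw [← Gamma_add_one (by push_cast; linarith)]
      push_cast
      ring_nf
    have hflip : (-1) ^ m * Gamma (s - m) =
        ((m : ℝ) + 1 - s) * ((-1) ^ (m + 1) * Gamma (s - (m + 1 : ℕ))) := by
      rw [hrec]
      push_cast
      ring
    exact pos_of_mul_pos_right (hflip ▸ ih) (by linarith)

theorem Finset.sum_Icc_neg_natCast_succ {M : Type*} [AddCommMonoid M] (f : ℤ → M) (n : ℕ) :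
    ∑ k ∈ Icc (-((n + 1 : ℕ) : ℤ)) (n + 1 : ℕ), f k =
      ∑ k ∈ Icc (-(n : ℤ)) n, f k + f (-((n + 1 : ℕ) : ℤ)) + f ((n + 1 : ℕ) : ℤ) := by
  have hIcc : Icc (-((n + 1 : ℕ) : ℤ)) (n + 1 : ℕ) =
      insert (-(n + 1 : ℤ)) (insert (n + 1 : ℤ) (Icc (-(n : ℤ)) n)) := by
    ext k
    simp only [mem_Icc, mem_insert]
    omega
  rw [hIcc, sum_insert (by simp only [mem_insert, mem_Icc]; omega),
    sum_insert (by simp only [mem_Icc]; omega)]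
  push_cast
  abel

theorem fracCoeff_neg (α : ℝ) (k : ℤ) : fracCoeff α (-k) = fracCoeff α k := by
  simp only [fracCoeff, neg_one_zpow_eq_ite, even_neg, Int.cast_neg, sub_neg_eq_add,
    ← sub_eq_add_neg, mul_comm (Gamma (α / 2 + k + 1))]

theorem fracCoeff_natCast (α : ℝ) (n : ℕ) :
    fracCoeff α n =
      (-1) ^ n * Gamma (α + 1) / (Gamma (α / 2 - n + 1) * Gamma (α / 2 + n + 1)) := by
  simp [fracCoeff]

theorem sum_Icc_fracCoeff {α : ℝ} (hα₀ : 0 < α) (hα₂ : α < 2) (m : ℕ) :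
    ∑ k ∈ Finset.Icc (-(m : ℤ)) m, fracCoeff α k =
      Gamma (α + 1) / (α / 2 * ((-1) ^ m * Gamma (α / 2 - m)) * Gamma (α / 2 + m + 1)) := by
  have hc : 0 < α / 2 := by linarith
  induction m with
  | zero =>
    rw [Nat.cast_zero, neg_zero, Finset.Icc_self, Finset.sum_singleton, ← Nat.cast_zero,
      fracCoeff_natCast]
    simp only [Nat.cast_zero, pow_zero, one_mul, sub_zero, add_zero, Gamma_add_one hc.ne']
  | succ m ih =>
    have hG : Gamma (α / 2 - (m + 1 : ℕ)) ≠ 0 :=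
      right_ne_zero_of_mul (neg_one_pow_mul_Gamma_sub_nat_pos hc (by linarith) (m + 1)).ne'
    have hH : Gamma (α / 2 + m + 1) ≠ 0 := (Gamma_pos_of_pos (by positivity)).ne'
    have hlin : α / 2 - (m + 1 : ℕ) ≠ 0 := by push_cast; linarith
    have hlow : Gamma (α / 2 - m) = (α / 2 - (m + 1 : ℕ)) * Gamma (α / 2 - (m + 1 : ℕ)) := by
      rw [← Gamma_add_one hlin]
      push_cast
      ring_nf
    have hhigh : Gamma (α / 2 + (m + 1 : ℕ) + 1) = (α / 2 + m + 1) * Gamma (α / 2 + m + 1) := by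
      rw [← Gamma_add_one (by positivity)]
      push_cast
      ring_nf
    rw [Finset.sum_Icc_neg_natCast_succ, ih, fracCoeff_neg, fracCoeff_natCast, hhigh,
      show α / 2 - (m + 1 : ℕ) + 1 = α / 2 - m by push_cast; ring, hlow]
    push_cast at hG hlin ⊢
    rw [pow_succ]
    generalize Gamma (α / 2 - (m + 1)) = G at *
    generalize Gamma (α / 2 + m + 1) = H at *
    have hsq : ((-1 : ℝ) ^ m) ^ 2 = 1 := by rw [← pow_mul, pow_mul', neg_one_sq, one_pow]
    field_simp
    rw [hsq, div_eq_iff (by contrapose! hlin; linarith)]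
    ring

theorem fracCoeff_symmetric_partial_sum_pos (α : ℝ) (hα1 : 1 < α) (hα2 : α < 2)
    (m : ℕ) :
    0 < ∑ k ∈ Finset.Icc (-(m : ℤ)) (m : ℤ), fracCoeff α k := by
  rw [sum_Icc_fracCoeff (by linarith) hα2 m]
  have hsign := neg_one_pow_mul_Gamma_sub_nat_pos (s := α / 2) (by linarith) (by linarith) m
  exact div_pos (Gamma_pos_of_pos (by linarith))
    (mul_pos (mul_pos (by linarith) hsign) (Gamma_pos_of_pos (by positivity)))
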